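/- arXiv:2403.04356 — 5 statements merged into one kernel-verified Lean document; each statement's English description precedes it below -/
import Mathlib

section
/- For any finite sets B, R ⊆ ℝ with |B| ≤ |R|, there exists an injective map φ : B → R minimizing ∑_{b∈B} |b - φ(b)| over all injective maps B → R, such that φ is strictly monotone increasing (i.e., b' < b implies φ(b') < φ(b)). -/
/-!
Take a matching `φ` that minimises the cost and, among all cost minimisers, maximises the
score `∑ b * φ b`. If it had a crossing `b' < b` with `φ b < φ b'`, exchanging the two partners
would not increase the cost (uncrossing two segments on a line never lengthens them) but would
strictly increase the score, so `φ` has no crossing.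
-/

open Finset Function Equiv

section Swap

variable {ι : Type*} [Fintype ι] [DecidableEq ι]

theorem Fintype.sum_comp_swap {β M : Type*} [AddCommGroup M] (F : ι → β → M) (w : ι → β)
    {i j : ι} (hij : i ≠ j) :
    ∑ c, F c (w (swap i j c)) =
      ∑ c, F c (w c) + (F i (w j) + F j (w i) - F i (w i) - F j (w j)) := by
  rw [← sub_eq_iff_eq_add', ← sum_sub_distrib,
    Fintype.sum_eq_add i j hij fun c hc => by rw [swap_apply_of_ne_of_ne hc.1 hc.2, sub_self]]
  simp only [swap_apply_left, swap_apply_right]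
  abel

variable {α : Type*} [CommRing α] [LinearOrder α] [IsStrictOrderedRing α]

lemma abs_sub_add_abs_sub_le_of_le {a b c d : α} (hab : a ≤ b) (hcd : c ≤ d) :
    |a - c| + |b - d| ≤ |a - d| + |b - c| := by
  rcases abs_cases (a - c) with ⟨hac, _⟩ | ⟨hac, _⟩ <;>
    rcases abs_cases (b - d) with ⟨hbd, _⟩ | ⟨hbd, _⟩ <;>
    linarith [le_abs_self (a - d), neg_abs_le (a - d), le_abs_self (b - c), neg_abs_le (b - c)]

lemma sum_abs_sub_comp_swap_le (u w : ι → α) {i j : ι} (hu : u i ≤ u j) (hw : w j ≤ w i) :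
    ∑ c, |u c - w (swap i j c)| ≤ ∑ c, |u c - w c| := by
  rcases eq_or_ne i j with rfl | hij
  · simp
  rw [Fintype.sum_comp_swap (fun c x => |u c - x|) w hij]
  linarith [abs_sub_add_abs_sub_le_of_le hu hw]

lemma sum_mul_lt_sum_mul_comp_swap (u w : ι → α) {i j : ι} (hu : u i < u j) (hw : w j < w i) :
    ∑ c, u c * w c < ∑ c, u c * w (swap i j c) := by
  have hij : i ≠ j := by rintro rfl; exact hu.false
  rw [Fintype.sum_comp_swap (fun c x => u c * x) w hij]
  nlinarith [mul_pos (sub_pos.2 hu) (sub_pos.2 hw)]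

end Swap

section Matching

variable {α : Type*} {B R : Finset α}

def matchingCost [AddCommGroup α] [LinearOrder α] (f : B ↪ R) : α :=
  ∑ b : B, |(b : α) - f b|

lemma matchingCost_eq_sum [AddCommGroup α] [LinearOrder α] (f : B ↪ R) (φ : α → α)
    (hφ : ∀ b : B, φ b = f b) :
    matchingCost f = ∑ b ∈ B, |b - φ b| := by
  rw [matchingCost, ← sum_coe_sort B]
  exact sum_congr rfl fun b _ => by rw [hφ]

theorem exists_strictMono_forall_matchingCost_le [CommRing α] [LinearOrder α]
    [IsStrictOrderedRing α] (h : #B ≤ #R) :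
    ∃ f : B ↪ R, StrictMono f ∧ ∀ g : B ↪ R, matchingCost f ≤ matchingCost g := by
  have : Nonempty (B ↪ R) := Embedding.nonempty_of_card_le (by simpa using h)
  obtain ⟨f, -, hf⟩ := exists_min_image univ
    (fun f : B ↪ R => toLex (matchingCost f, -∑ b : B, (b : α) * f b)) univ_nonempty
  have hf_le (g : B ↪ R) := Prod.Lex.toLex_le_toLex'.1 (hf g (mem_univ g))
  refine ⟨f, fun i j hij => ?_, fun g => (hf_le g).1⟩
  by_contra hle
  have hlt : (f j : α) < f i :=
    lt_of_le_of_ne (not_lt.1 hle) fun e => hij.ne (f.injective (Subtype.ext e)).symm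
  let g := (swap i j).toEmbedding.trans f
  have hcost : matchingCost g ≤ matchingCost f :=
    sum_abs_sub_comp_swap_le (fun b : B => (b : α)) (fun b => (f b : α)) hij.le hlt.le
  have hscore := sum_mul_lt_sum_mul_comp_swap (fun b : B => (b : α)) (fun b => (f b : α)) hij hlt
  have := (hf_le g).2 (le_antisymm (hf_le g).1 hcost)
  simp only [neg_le_neg_iff] at this
  exact this.not_gt hscore

end Matching

theorem exists_monotone_optimal_matching (B R : Finset ℝ) (h : B.card ≤ R.card) :
    ∃ φ : ℝ → ℝ, (∀ b ∈ B, φ b ∈ R) ∧ Set.InjOn φ B ∧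
      (∀ ψ : ℝ → ℝ, (∀ b ∈ B, ψ b ∈ R) → Set.InjOn ψ B →
        ∑ b ∈ B, |b - φ b| ≤ ∑ b ∈ B, |b - ψ b|) ∧
      (∀ b ∈ B, ∀ b' ∈ B, b' < b → φ b' < φ b) := by
  obtain ⟨f, hmono, hopt⟩ := exists_strictMono_forall_matchingCost_le h
  let φ : ℝ → ℝ := fun x => if hx : x ∈ B then (f ⟨x, hx⟩ : ℝ) else x
  have hφ (b : B) : φ b = f b := dif_pos b.2
  refine ⟨φ, fun b hb => hφ ⟨b, hb⟩ ▸ (f _).2, fun x hx y hy hxy => ?_,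
    fun ψ hψ hinj => ?_, fun b hb b' hb' hlt => ?_⟩
  · exact congrArg Subtype.val
      (f.injective (Subtype.ext ((hφ ⟨x, hx⟩).symm.trans (hxy.trans (hφ ⟨y, hy⟩)))))
  · let g : B ↪ R := ⟨fun b => ⟨ψ b, hψ b b.2⟩,
      fun a b hab => Subtype.ext (hinj a.2 b.2 (congrArg Subtype.val hab))⟩
    rw [← matchingCost_eq_sum f φ hφ, ← matchingCost_eq_sum g ψ fun _ => rfl]
    exact hopt g
  · rw [hφ ⟨b', hb'⟩, hφ ⟨b, hb⟩]
    exact hmono hlt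
end

section
/- Let x, y ∈ {0,1}^d be orthogonal vectors (i.e., ∑ᵢ x[i]·y[i] = 0). Define R(x) ⊆ ℤ to contain, for each i ∈ {1,…,d}, the points {4i-3, 4i-2, 4i-1, 4i} if x[i]=0 and the points {4i-2, 4i-1} if x[i]=1; define B(y) ⊆ ℤ to contain, for each i, the points {4i-2, 4i-1} if y[i]=0 and {4i-3, 4i} if y[i]=1. Then there is an injective map φ : B(y) → R(x) with φ(b) = b for all b ∈ B(y); in particular B(y) ⊆ R(x). -/
/-- The red vector gadget (interior points only). -/
def Rgad (d : ℕ) (x : Fin d → ℕ) : Set ℤ :=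
  ⋃ i : Fin d, if x i = 0 then
    ({4 * ((i : ℤ) + 1) - 3, 4 * ((i : ℤ) + 1) - 2, 4 * ((i : ℤ) + 1) - 1,
      4 * ((i : ℤ) + 1)} : Set ℤ)
  else {4 * ((i : ℤ) + 1) - 2, 4 * ((i : ℤ) + 1) - 1}

/-- The blue vector gadget (interior points only). -/
def Bgad (d : ℕ) (y : Fin d → ℕ) : Set ℤ :=
  ⋃ i : Fin d, if y i = 0 then
    ({4 * ((i : ℤ) + 1) - 2, 4 * ((i : ℤ) + 1) - 1} : Set ℤ)
  else {4 * ((i : ℤ) + 1) - 3, 4 * ((i : ℤ) + 1)}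

/- Either `m = 0`, and the red block is all of `a - 3, …, a`, or `n = 0`, and the blue block
is `{a - 2, a - 1}`, which every red block contains. -/
lemma blue_block_subset_red_block {m n : ℕ} (h : m * n = 0) (a : ℤ) :
    (if n = 0 then ({a - 2, a - 1} : Set ℤ) else {a - 3, a}) ⊆
      if m = 0 then ({a - 3, a - 2, a - 1, a} : Set ℤ) else {a - 2, a - 1} := by
  rcases Nat.mul_eq_zero.mp h with rfl | rfl
  all_goals
    split_ifs <;> intro b <;> simp only [Set.mem_insert_iff, Set.mem_singleton_iff] <;> tauto

lemma Bgad_subset_Rgad {d : ℕ} {x y : Fin d → ℕ} (horth : ∀ i, x i * y i = 0) :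
    Bgad d y ⊆ Rgad d x :=
  Set.iUnion_mono fun i => blue_block_subset_red_block (horth i) _

theorem orthogonal_gadget_subset_general (d : ℕ) (x y : Fin d → ℕ)
    (horth : ∀ i, x i * y i = 0) :
    Bgad d y ⊆ Rgad d x ∧
    ∃ φ : ℤ → ℤ, Set.InjOn φ (Bgad d y) ∧
      (∀ b ∈ Bgad d y, φ b ∈ Rgad d x) ∧ (∀ b ∈ Bgad d y, φ b = b) := by
  have hsub := Bgad_subset_Rgad (x := x) horth
  exact ⟨hsub, id, Set.injOn_id _, hsub, fun _ _ => rfl⟩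

theorem orthogonal_gadget_subset (d : ℕ) (hd : 0 < d) (x y : Fin d → ℕ)
    (hx : ∀ i, x i ≤ 1) (hy : ∀ i, y i ≤ 1)
    (horth : ∀ i, x i * y i = 0) :
    Bgad d y ⊆ Rgad d x ∧
    ∃ φ : ℤ → ℤ, Set.InjOn φ (Bgad d y) ∧
      (∀ b ∈ Bgad d y, φ b ∈ Rgad d x) ∧ (∀ b ∈ Bgad d y, φ b = b) :=
  orthogonal_gadget_subset_general d x y horth
end

section
/- With the setup of the previous gadget (points p(u,v) with coordinates u at i, v at j, 0 elsewhere; p'(u,v) with u at i, v at j, N elsewhere, for (u,v) ∈ E ⊆ {1,…,N}²): if τ ∈ {1,…,N}^d and (τᵢ, τⱼ) ∈ E, then min_{(u,v)∈E} ‖τ - p(u,v)‖₁ + min_{(u,v)∈E} ‖τ - p'(u,v)‖₁ = (d-2)·N. -/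
/-!
Both minima are attained at `(τ i, τ j) ∈ E`, where the coordinates `i` and `j` contribute
nothing, and no other coordinate depends on the choice in `E`. Each of the remaining `d - 2`
coordinates `t ∈ [0, N]` then contributes `|t| + |t - N| = N` to the sum.
-/

open Finset

section PairPoint

variable {ι : Type*} [DecidableEq ι]

/-- The paper's `p(a, b)` is `pairPoint i j a b 0` and its `p'(a, b)` is `pairPoint i j a b N`. -/
def pairPoint (i j : ι) (a b c : ℝ) : ι → ℝ :=
  fun ℓ => if ℓ = i then a else if ℓ = j then b else c

theorem abs_sub_pairPoint_zero_add_abs_sub_pairPoint (x : ι → ℝ) (i j : ι) {c : ℝ} (ℓ : ι)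
    (hx₀ : 0 ≤ x ℓ) (hxc : x ℓ ≤ c) :
    |x ℓ - pairPoint i j (x i) (x j) 0 ℓ| + |x ℓ - pairPoint i j (x i) (x j) c ℓ|
      = pairPoint i j 0 0 c ℓ := by
  unfold pairPoint
  split_ifs with hi hj
  · simp [hi]
  · simp [hj]
  · rw [sub_zero, abs_of_nonneg hx₀, abs_of_nonpos (sub_nonpos.mpr hxc)]
    ring

variable [Fintype ι]

theorem sum_pairPoint {i j : ι} (hij : i ≠ j) (a b c : ℝ) :
    ∑ ℓ, pairPoint i j a b c ℓ = a + b + ((Fintype.card ι : ℝ) - 2) * c := by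
  have hsplit : ∀ ℓ, pairPoint i j a b c ℓ
      = c + (if ℓ = i then a - c else 0) + (if ℓ = j then b - c else 0) := by
    intro ℓ
    by_cases hi : ℓ = i
    · subst hi; simp [pairPoint, hij]
    · by_cases hj : ℓ = j
      · subst hj; simp [pairPoint, hij.symm]
      · simp [pairPoint, hi, hj]
  simp only [hsplit, sum_add_distrib, sum_ite_eq', mem_univ, if_true, sum_const, card_univ,
    nsmul_eq_mul]
  ring

theorem sum_abs_sub_pairPoint_self_le (x : ι → ℝ) (i j : ι) (a b c : ℝ) :
    ∑ ℓ, |x ℓ - pairPoint i j (x i) (x j) c ℓ| ≤ ∑ ℓ, |x ℓ - pairPoint i j a b c ℓ| := by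
  refine sum_le_sum fun ℓ _ => ?_
  unfold pairPoint
  split_ifs with hi hj
  · simp [hi]
  · simp [hj]
  · rfl

theorem inf'_sum_abs_sub_pairPoint (E : Finset (ℤ × ℤ)) (hE : E.Nonempty) (τ : ι → ℤ)
    (i j : ι) (c : ℝ) (hmem : (τ i, τ j) ∈ E) :
    E.inf' hE (fun uv => ∑ ℓ, |(τ ℓ : ℝ) - pairPoint i j uv.1 uv.2 c ℓ|)
      = ∑ ℓ, |(τ ℓ : ℝ) - pairPoint i j (τ i) (τ j) c ℓ| :=
  le_antisymm (inf'_le _ hmem)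
    (le_inf' _ _ fun _ _ => sum_abs_sub_pairPoint_self_le (fun ℓ => (τ ℓ : ℝ)) i j _ _ c)

end PairPoint

theorem gadget_pair_equality_general (d : ℕ) (i j : Fin d) (hij : i < j)
    (N : ℤ) (E : Finset (ℤ × ℤ)) (hE : E.Nonempty)
    (τ : Fin d → ℤ) (hτ : ∀ ℓ, 1 ≤ τ ℓ ∧ τ ℓ ≤ N)
    (hmem : (τ i, τ j) ∈ E) :
    E.inf' hE (fun uv => ∑ ℓ,
        |(τ ℓ : ℝ) - (if ℓ = i then (uv.1 : ℝ) else if ℓ = j then (uv.2 : ℝ) else 0)|)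
    + E.inf' hE (fun uv => ∑ ℓ,
        |(τ ℓ : ℝ) - (if ℓ = i then (uv.1 : ℝ) else if ℓ = j then (uv.2 : ℝ) else (N : ℝ))|)
    = ((d : ℝ) - 2) * N := by
  change E.inf' hE (fun uv => ∑ ℓ, |(τ ℓ : ℝ) - pairPoint i j uv.1 uv.2 0 ℓ|)
    + E.inf' hE (fun uv => ∑ ℓ, |(τ ℓ : ℝ) - pairPoint i j uv.1 uv.2 N ℓ|) = _
  rw [inf'_sum_abs_sub_pairPoint E hE τ i j 0 hmem, inf'_sum_abs_sub_pairPoint E hE τ i j N hmem,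
    ← sum_add_distrib]
  have hτℓ : ∀ ℓ, 0 ≤ (τ ℓ : ℝ) ∧ (τ ℓ : ℝ) ≤ N := fun ℓ =>
    ⟨by exact_mod_cast (zero_lt_one.trans_le (hτ ℓ).1).le, by exact_mod_cast (hτ ℓ).2⟩
  calc ∑ ℓ, (|(τ ℓ : ℝ) - pairPoint i j (τ i) (τ j) 0 ℓ|
          + |(τ ℓ : ℝ) - pairPoint i j (τ i) (τ j) N ℓ|)
      = ∑ ℓ, pairPoint i j 0 0 N ℓ := sum_congr rfl fun ℓ _ =>
        abs_sub_pairPoint_zero_add_abs_sub_pairPoint (fun ℓ => (τ ℓ : ℝ)) i j ℓ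
          (hτℓ ℓ).1 (hτℓ ℓ).2
    _ = ((d : ℝ) - 2) * N := by
        rw [sum_pairPoint hij.ne, Fintype.card_fin, zero_add, zero_add]

theorem gadget_pair_equality (d : ℕ) (hd : 2 ≤ d) (i j : Fin d) (hij : i < j)
    (N : ℤ) (hN : 1 ≤ N) (E : Finset (ℤ × ℤ)) (hE : E.Nonempty)
    (hEbox : ∀ uv ∈ E, 1 ≤ uv.1 ∧ uv.1 ≤ N ∧ 1 ≤ uv.2 ∧ uv.2 ≤ N)
    (τ : Fin d → ℤ) (hτ : ∀ ℓ, 1 ≤ τ ℓ ∧ τ ℓ ≤ N)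
    (hmem : (τ i, τ j) ∈ E) :
    E.inf' hE (fun uv => ∑ ℓ,
        |(τ ℓ : ℝ) - (if ℓ = i then (uv.1 : ℝ) else if ℓ = j then (uv.2 : ℝ) else 0)|)
    + E.inf' hE (fun uv => ∑ ℓ,
        |(τ ℓ : ℝ) - (if ℓ = i then (uv.1 : ℝ) else if ℓ = j then (uv.2 : ℝ) else (N : ℝ))|)
    = ((d : ℝ) - 2) * N :=
  gadget_pair_equality_general d i j hij N E hE τ hτ hmem
end

section
/- With the same setup: if τ ∈ ℝ^d and the pair of nearest integers (⌊τᵢ⌉, ⌊τⱼ⌉) is not in E ⊆ ℤ², then min_{(u,v)∈E} ‖τ - p(u,v)‖₁ + min_{(u,v)∈E} ‖τ - p'(u,v)‖₁ ≥ (d-2)·N + 1. -/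
/-!
If `(⌊τᵢ⌉, ⌊τⱼ⌉) ∉ E`, every `(u, v) ∈ E` differs from the nearest-integer pair in some coordinate,
and an integer other than the nearest one is at distance at least `1/2`; so both minima pay at
least `1/2` on the coordinates `i, j`. On each of the `d - 2` remaining coordinates the two points
sit at `0` and at `N`, and the triangle inequality makes the two minima pay at least `N` there
together.
-/

open Finset

theorem half_le_abs_sub_int_of_ne {x : ℝ} {m u : ℤ} (hm : |x - m| ≤ 1 / 2) (hu : u ≠ m) :
    1 / 2 ≤ |x - u| := by
  have hone : (1 : ℝ) ≤ |(u : ℝ) - m| := by exact_mod_cast Int.one_le_abs (sub_ne_zero.mpr hu)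
  have htri := abs_sub_le (u : ℝ) x m
  rw [abs_sub_comm (u : ℝ) x] at htri
  linarith

theorem half_le_abs_sub_add_abs_sub_of_ne {x y : ℝ} {m₁ m₂ u v : ℤ} (hm₁ : |x - m₁| ≤ 1 / 2)
    (hm₂ : |y - m₂| ≤ 1 / 2) (huv : (u, v) ≠ (m₁, m₂)) :
    1 / 2 ≤ |x - u| + |y - v| := by
  by_cases hu : u = m₁
  · have hv : v ≠ m₂ := fun hv => huv (by rw [hu, hv])
    linarith [half_le_abs_sub_int_of_ne hm₂ hv, abs_nonneg (x - u)]
  · linarith [half_le_abs_sub_int_of_ne hm₁ hu, abs_nonneg (y - v)]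

theorem Finset.card_mul_abs_sub_le_sum_abs_sub_add_sum_abs_sub {ι : Type*} (s : Finset ι)
    (f : ι → ℝ) (a b : ℝ) :
    s.card * |a - b| ≤ ∑ ℓ ∈ s, |f ℓ - a| + ∑ ℓ ∈ s, |f ℓ - b| := by
  rw [← sum_add_distrib, ← nsmul_eq_mul, ← sum_const]
  refine sum_le_sum fun ℓ _ => ?_
  rw [← abs_sub_comm a]
  exact abs_sub_le a (f ℓ) b

section TwoCoordinates

variable {ι : Type*} [Fintype ι] [DecidableEq ι] {i j : ι}

theorem sum_abs_sub_ite_ite (τ : ι → ℝ) (hij : i ≠ j) (a b c : ℝ) :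
    ∑ ℓ, |τ ℓ - (if ℓ = i then a else if ℓ = j then b else c)|
      = |τ i - a| + |τ j - b| + ∑ ℓ ∈ {i, j}ᶜ, |τ ℓ - c| := by
  rw [← sum_add_sum_compl {i, j}, sum_pair hij, if_pos rfl, if_neg hij.symm, if_pos rfl]
  congr 1
  refine sum_congr rfl fun ℓ hℓ => ?_
  have hℓ' : ℓ ≠ i ∧ ℓ ≠ j := by simpa [not_or] using hℓ
  rw [if_neg hℓ'.1, if_neg hℓ'.2]

theorem card_compl_pair_eq (hij : i ≠ j) :
    (({i, j}ᶜ : Finset ι).card : ℝ) = Fintype.card ι - 2 := by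
  rw [← card_compl_add_card {i, j}, card_pair hij]
  push_cast
  ring

theorem half_add_sum_compl_pair_le_inf' (E : Finset (ℤ × ℤ)) (hE : E.Nonempty) (τ : ι → ℝ)
    (hij : i ≠ j) {m₁ m₂ : ℤ} (hm₁ : |τ i - m₁| ≤ 1 / 2) (hm₂ : |τ j - m₂| ≤ 1 / 2)
    (hnot : (m₁, m₂) ∉ E) (c : ℝ) :
    1 / 2 + ∑ ℓ ∈ {i, j}ᶜ, |τ ℓ - c|
      ≤ E.inf' hE (fun uv => ∑ ℓ,
          |τ ℓ - (if ℓ = i then (uv.1 : ℝ) else if ℓ = j then (uv.2 : ℝ) else c)|) := by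
  refine le_inf' hE _ fun uv huv => ?_
  rw [sum_abs_sub_ite_ite τ hij]
  have huv' : (uv.1, uv.2) ≠ (m₁, m₂) := fun h => hnot (h ▸ huv)
  linarith [half_le_abs_sub_add_abs_sub_of_ne hm₁ hm₂ huv']

end TwoCoordinates

theorem gadget_pair_nonedge_bound_general (d : ℕ) (i j : Fin d) (hij : i < j)
    (N : ℤ) (E : Finset (ℤ × ℤ)) (hE : E.Nonempty)
    (τ : Fin d → ℝ) (m₁ m₂ : ℤ)
    (hm₁ : τ i - m₁ ∈ Set.Ioc (-(1/2) : ℝ) (1/2))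
    (hm₂ : τ j - m₂ ∈ Set.Ioc (-(1/2) : ℝ) (1/2))
    (hnot : (m₁, m₂) ∉ E) :
    E.inf' hE (fun uv => ∑ ℓ,
        |τ ℓ - (if ℓ = i then (uv.1 : ℝ) else if ℓ = j then (uv.2 : ℝ) else 0)|)
    + E.inf' hE (fun uv => ∑ ℓ,
        |τ ℓ - (if ℓ = i then (uv.1 : ℝ) else if ℓ = j then (uv.2 : ℝ) else (N : ℝ))|)
    ≥ ((d : ℝ) - 2) * N + 1 := by
  have hi : |τ i - m₁| ≤ 1 / 2 := abs_le.mpr ⟨hm₁.1.le, hm₁.2⟩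
  have hj : |τ j - m₂| ≤ 1 / 2 := abs_le.mpr ⟨hm₂.1.le, hm₂.2⟩
  have h₀ := half_add_sum_compl_pair_le_inf' E hE τ hij.ne hi hj hnot 0
  have hN := half_add_sum_compl_pair_le_inf' E hE τ hij.ne hi hj hnot N
  have hrest : ((d : ℝ) - 2) * N ≤ ∑ ℓ ∈ {i, j}ᶜ, |τ ℓ - 0| + ∑ ℓ ∈ {i, j}ᶜ, |τ ℓ - N| := by
    calc ((d : ℝ) - 2) * N = ({i, j}ᶜ : Finset (Fin d)).card * N := by
          rw [card_compl_pair_eq hij.ne, Fintype.card_fin]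
      _ ≤ ({i, j}ᶜ : Finset (Fin d)).card * |(0 : ℝ) - N| := by
          gcongr
          rw [zero_sub, abs_neg]
          exact le_abs_self _
      _ ≤ _ := card_mul_abs_sub_le_sum_abs_sub_add_sum_abs_sub _ τ 0 N
  linarith

theorem gadget_pair_nonedge_bound (d : ℕ) (hd : 2 ≤ d) (i j : Fin d) (hij : i < j)
    (N : ℤ) (hN : 1 ≤ N) (E : Finset (ℤ × ℤ)) (hE : E.Nonempty)
    (τ : Fin d → ℝ) (m₁ m₂ : ℤ)
    (hm₁ : τ i - m₁ ∈ Set.Ioc (-(1/2) : ℝ) (1/2))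
    (hm₂ : τ j - m₂ ∈ Set.Ioc (-(1/2) : ℝ) (1/2))
    (hnot : (m₁, m₂) ∉ E) :
    E.inf' hE (fun uv => ∑ ℓ,
        |τ ℓ - (if ℓ = i then (uv.1 : ℝ) else if ℓ = j then (uv.2 : ℝ) else 0)|)
    + E.inf' hE (fun uv => ∑ ℓ,
        |τ ℓ - (if ℓ = i then (uv.1 : ℝ) else if ℓ = j then (uv.2 : ℝ) else (N : ℝ))|)
    ≥ ((d : ℝ) - 2) * N + 1 :=
  gadget_pair_nonedge_bound_general d i j hij N E hE τ m₁ m₂ hm₁ hm₂ hnot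
end

section
/- Let G be a bipartite graph on vertex set B ⊎ R that is the symmetric difference of two perfect matchings φ, φ' (viewed as edge sets) between a finite set B and a finite set R with |B| ≤ |R|. Then every vertex of G has degree at most 2, every vertex of B has degree 0 or 2, and every connected component of G containing an edge is a path or a cycle; moreover if both φ and φ' are non-crossing (monotone) matchings of points on a line, every such component is a path whose endpoints both lie in R. -/
/-- The symmetric difference graph of two matchings `φ, φ'` from `B` into `ℝ`,
on the vertex set `ℝ ⊕ ℝ` (left copy for blue points, right copy for red points). -/
def matchGraph (B : Finset ℝ) (φ φ' : ℝ → ℝ) : SimpleGraph (ℝ ⊕ ℝ) :=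
  SimpleGraph.fromRel (fun v w =>
    ∃ b ∈ B, φ b ≠ φ' b ∧ v = Sum.inl b ∧
      (w = Sum.inr (φ b) ∨ w = Sum.inr (φ' b)))

/-!
Each blue point `b` with `φ b ≠ φ' b` is joined to exactly its two partners, and each red point
meets at most one edge of each matching; this gives the degree bounds, and a vertex of degree one
must be red. For non-crossing matchings it suffices to show that no nonempty vertex set `S` gives
every member two neighbours inside `S`, as the support of a cycle would. Let `b` be the largest
blue point of such an `S`. The red vertex `φ b` has a second neighbour `b'` in `S` with
`φ' b' = φ b`, and `b' < b` forces `φ b = φ' b' < φ' b`; symmetrically `φ' b < φ b`.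
-/

open SimpleGraph

section Degeneracy

variable {V : Type*} {G : SimpleGraph V}

theorem SimpleGraph.Walk.IsCycle.nontrivial_neighborSet_inter_support {u v : V}
    {c : G.Walk u u} (hc : c.IsCycle) (hv : v ∈ c.support) :
    (G.neighborSet v ∩ {w | w ∈ c.support}).Nontrivial := by
  have htwo : 1 < (c.toSubgraph.neighborSet v).ncard := by
    rw [hc.ncard_neighborSet_toSubgraph_eq_two hv]; norm_num
  refine (Set.one_lt_ncard_iff_nontrivial_and_finite.mp htwo).1.mono fun w hw => ?_
  exact ⟨hw.adj_sub, c.mem_verts_toSubgraph.mp hw.snd_mem⟩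

theorem SimpleGraph.isAcyclic_of_forall_exists_subsingleton_neighborSet_inter
    (h : ∀ S : Set V, S.Nonempty → ∃ v ∈ S, (G.neighborSet v ∩ S).Subsingleton) :
    G.IsAcyclic := by
  intro u c hc
  obtain ⟨v, hv, hsub⟩ := h {w | w ∈ c.support} ⟨u, c.start_mem_support⟩
  exact (hc.nontrivial_neighborSet_inter_support hv).not_subsingleton hsub

end Degeneracy

section MatchGraph

variable {B : Finset ℝ} {φ φ' : ℝ → ℝ}

@[simp]
theorem matchGraph_adj_inl {x : ℝ} {w : ℝ ⊕ ℝ} :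
    (matchGraph B φ φ').Adj (Sum.inl x) w ↔
      x ∈ B ∧ φ x ≠ φ' x ∧ (w = Sum.inr (φ x) ∨ w = Sum.inr (φ' x)) := by
  rw [matchGraph, fromRel_adj]
  constructor
  · rintro ⟨-, ⟨b, hb, hne, hx, hw⟩ | ⟨b, -, -, rfl, hw⟩⟩
    · obtain rfl := Sum.inl_injective hx
      exact ⟨hb, hne, hw⟩
    · rcases hw with hw | hw <;> cases hw
  · rintro ⟨hx, hne, hw⟩
    refine ⟨?_, Or.inl ⟨x, hx, hne, rfl, hw⟩⟩
    rcases hw with rfl | rfl <;> simp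

@[simp]
theorem matchGraph_adj_inr {r : ℝ} {w : ℝ ⊕ ℝ} :
    (matchGraph B φ φ').Adj (Sum.inr r) w ↔
      ∃ b ∈ B, φ b ≠ φ' b ∧ w = Sum.inl b ∧ (φ b = r ∨ φ' b = r) := by
  rw [← (matchGraph B φ φ').adj_comm]
  cases w with
  | inl b => simp [eq_comm]
  | inr s => simp [matchGraph]

theorem matchGraph_comm : matchGraph B φ φ' = matchGraph B φ' φ := by
  ext v w
  cases v with
  | inl x => simp only [matchGraph_adj_inl, ne_comm, or_comm]
  | inr r => simp only [matchGraph_adj_inr, ne_comm, or_comm]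

theorem neighborSet_matchGraph_inl (x : ℝ) :
    (matchGraph B φ φ').neighborSet (Sum.inl x) =
      if x ∈ B ∧ φ x ≠ φ' x then {Sum.inr (φ x), Sum.inr (φ' x)} else ∅ := by
  ext w
  split_ifs with hx <;> simp_all

theorem ncard_neighborSet_matchGraph_inl (x : ℝ) :
    ((matchGraph B φ φ').neighborSet (Sum.inl x)).ncard =
      if x ∈ B ∧ φ x ≠ φ' x then 2 else 0 := by
  rw [neighborSet_matchGraph_inl]
  split_ifs with hx
  · exact Set.ncard_pair (by simpa using hx.2)
  · exact Set.ncard_empty _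

theorem ncard_neighborSet_matchGraph_inr_le_two (hφ : Set.InjOn φ B) (hφ' : Set.InjOn φ' B)
    (r : ℝ) : ((matchGraph B φ φ').neighborSet (Sum.inr r)).ncard ≤ 2 := by
  have hsub : (matchGraph B φ φ').neighborSet (Sum.inr r) ⊆
      Sum.inl '' (↑B ∩ φ ⁻¹' {r}) ∪ Sum.inl '' (↑B ∩ φ' ⁻¹' {r}) := by
    intro w hw
    obtain ⟨b, hb, -, rfl, hr | hr⟩ := matchGraph_adj_inr.mp hw
    · exact Or.inl ⟨b, ⟨hb, hr⟩, rfl⟩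
    · exact Or.inr ⟨b, ⟨hb, hr⟩, rfl⟩
  have hfiber {f : ℝ → ℝ} (hf : Set.InjOn f B) :
      (Sum.inl '' (↑B ∩ f ⁻¹' {r}) : Set (ℝ ⊕ ℝ)).ncard ≤ 1 := by
    have hs : (↑B ∩ f ⁻¹' {r}).Subsingleton :=
      fun _ ha _ hb => hf ha.1 hb.1 (ha.2.trans hb.2.symm)
    exact Set.ncard_le_one_iff_subsingleton.mpr (hs.image _)
  calc _ ≤ (Sum.inl '' (↑B ∩ φ ⁻¹' {r}) ∪ Sum.inl '' (↑B ∩ φ' ⁻¹' {r})).ncard :=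
        Set.ncard_le_ncard hsub
    _ ≤ _ := Set.ncard_union_le _ _
    _ ≤ 1 + 1 := add_le_add (hfiber hφ) (hfiber hφ')

theorem ncard_neighborSet_matchGraph_le_two (hφ : Set.InjOn φ B) (hφ' : Set.InjOn φ' B)
    (v : ℝ ⊕ ℝ) : ((matchGraph B φ φ').neighborSet v).ncard ≤ 2 := by
  cases v with
  | inl x => rw [ncard_neighborSet_matchGraph_inl]; split_ifs <;> norm_num
  | inr r => exact ncard_neighborSet_matchGraph_inr_le_two hφ hφ' r

theorem exists_inr_of_ncard_neighborSet_matchGraph_eq_one {R : Finset ℝ}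
    (hφR : ∀ b ∈ B, φ b ∈ R) (hφ'R : ∀ b ∈ B, φ' b ∈ R) {v : ℝ ⊕ ℝ}
    (hv : ((matchGraph B φ φ').neighborSet v).ncard = 1) : ∃ r ∈ R, v = Sum.inr r := by
  cases v with
  | inl x => rw [ncard_neighborSet_matchGraph_inl] at hv; split_ifs at hv; omega
  | inr r =>
    obtain ⟨w, hw⟩ := Set.nonempty_of_ncard_ne_zero (hv.trans_ne one_ne_zero)
    obtain ⟨b, hb, -, -, hr | hr⟩ := matchGraph_adj_inr.mp hw
    · exact ⟨r, hr ▸ hφR b hb, rfl⟩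
    · exact ⟨r, hr ▸ hφ'R b hb, rfl⟩

theorem lt_of_nontrivial_neighborSet_matchGraph_inter (hφ : Set.InjOn φ B)
    (hm' : StrictMonoOn φ' B) {S : Set (ℝ ⊕ ℝ)} {b : ℝ} (hb : b ∈ B)
    (hmax : ∀ c ∈ B, Sum.inl c ∈ S → c ≤ b)
    (hS : ((matchGraph B φ φ').neighborSet (Sum.inr (φ b)) ∩ S).Nontrivial) :
    φ b < φ' b := by
  obtain ⟨_, ⟨h₁, hS₁⟩, _, ⟨h₂, hS₂⟩, h₁₂⟩ := hS
  obtain ⟨b₁, hb₁, hne₁, rfl, hr₁⟩ := matchGraph_adj_inr.mp h₁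
  obtain ⟨b₂, hb₂, hne₂, rfl, hr₂⟩ := matchGraph_adj_inr.mp h₂
  have hpartner : ∃ c ∈ B, Sum.inl c ∈ S ∧ φ c ≠ φ' c ∧ φ' c = φ b := by
    rcases hr₁ with hr₁ | hr₁
    · rcases hr₂ with hr₂ | hr₂
      · exact absurd (by rw [hφ hb₁ hb hr₁, hφ hb₂ hb hr₂]) h₁₂
      · exact ⟨b₂, hb₂, hS₂, hne₂, hr₂⟩
    · exact ⟨b₁, hb₁, hS₁, hne₁, hr₁⟩
  obtain ⟨c, hc, hcS, hne, hcb⟩ := hpartner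
  have hlt : c < b := (hmax c hc hcS).lt_of_ne fun h => hne (h ▸ hcb.symm)
  exact hcb ▸ hm' hc hb hlt

theorem exists_subsingleton_neighborSet_matchGraph_inter (hm : StrictMonoOn φ B)
    (hm' : StrictMonoOn φ' B) (S : Set (ℝ ⊕ ℝ)) (hS : S.Nonempty) :
    ∃ v ∈ S, ((matchGraph B φ φ').neighborSet v ∩ S).Subsingleton := by
  classical
  by_contra! hall
  have hblue : (B.filter fun b => Sum.inl b ∈ S).Nonempty := by
    obtain ⟨v, hv⟩ := hS
    obtain ⟨w, ⟨hvw, hw⟩, -⟩ := hall v hv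
    cases v with
    | inl x => exact ⟨x, Finset.mem_filter.mpr ⟨(matchGraph_adj_inl.mp hvw).1, hv⟩⟩
    | inr r =>
      obtain ⟨b, hb, -, rfl, -⟩ := matchGraph_adj_inr.mp hvw
      exact ⟨b, Finset.mem_filter.mpr ⟨hb, hw⟩⟩
  obtain ⟨b, hbT, hmax⟩ := Finset.exists_max_image _ id hblue
  obtain ⟨hb, hbS⟩ := Finset.mem_filter.mp hbT
  replace hmax : ∀ c ∈ B, Sum.inl c ∈ S → c ≤ b :=
    fun c hc hcS => hmax c (Finset.mem_filter.mpr ⟨hc, hcS⟩)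
  have hred : Sum.inr (φ b) ∈ S ∧ Sum.inr (φ' b) ∈ S := by
    obtain ⟨_, ⟨h₁, hS₁⟩, _, ⟨h₂, hS₂⟩, h₁₂⟩ := hall _ hbS
    obtain ⟨-, -, rfl | rfl⟩ := matchGraph_adj_inl.mp h₁ <;>
      obtain ⟨-, -, rfl | rfl⟩ := matchGraph_adj_inl.mp h₂
    exacts [absurd rfl h₁₂, ⟨hS₁, hS₂⟩, ⟨hS₂, hS₁⟩, absurd rfl h₁₂]
  have hlt := lt_of_nontrivial_neighborSet_matchGraph_inter hm.injOn hm' hb hmax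
    (hall _ hred.1)
  have hgt := lt_of_nontrivial_neighborSet_matchGraph_inter hm'.injOn hm hb hmax
    (matchGraph_comm (φ := φ) ▸ hall _ hred.2)
  exact lt_asymm hlt hgt

end MatchGraph

theorem symmetric_difference_structure_general (B R : Finset ℝ)
    (φ φ' : ℝ → ℝ) (hφR : ∀ b ∈ B, φ b ∈ R) (hφ'R : ∀ b ∈ B, φ' b ∈ R)
    (hφ : Set.InjOn φ B) (hφ' : Set.InjOn φ' B) :
    (∀ v, ((matchGraph B φ φ').neighborSet v).ncard ≤ 2) ∧
    (∀ b ∈ B, ((matchGraph B φ φ').neighborSet (Sum.inl b)).ncard = 0 ∨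
              ((matchGraph B φ φ').neighborSet (Sum.inl b)).ncard = 2) ∧
    ((∀ b ∈ B, ∀ b' ∈ B, b' < b → φ b' < φ b) →
     (∀ b ∈ B, ∀ b' ∈ B, b' < b → φ' b' < φ' b) →
     (matchGraph B φ φ').IsAcyclic ∧
     (∀ v, ((matchGraph B φ φ').neighborSet v).ncard = 1 →
        ∃ r ∈ R, v = Sum.inr r)) := by
  refine ⟨ncard_neighborSet_matchGraph_le_two hφ hφ', fun b _ => ?_, fun hm hm' => ⟨?_,
    fun v => exists_inr_of_ncard_neighborSet_matchGraph_eq_one hφR hφ'R⟩⟩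
  · rw [ncard_neighborSet_matchGraph_inl]
    split_ifs <;> simp
  · exact isAcyclic_of_forall_exists_subsingleton_neighborSet_inter
      (exists_subsingleton_neighborSet_matchGraph_inter
        (fun a ha c hc hac => hm c hc a ha hac) (fun a ha c hc hac => hm' c hc a ha hac))

theorem symmetric_difference_structure (B R : Finset ℝ) (h : B.card ≤ R.card)
    (φ φ' : ℝ → ℝ) (hφR : ∀ b ∈ B, φ b ∈ R) (hφ'R : ∀ b ∈ B, φ' b ∈ R)
    (hφ : Set.InjOn φ B) (hφ' : Set.InjOn φ' B) :
    (∀ v, ((matchGraph B φ φ').neighborSet v).ncard ≤ 2) ∧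
    (∀ b ∈ B, ((matchGraph B φ φ').neighborSet (Sum.inl b)).ncard = 0 ∨
              ((matchGraph B φ φ').neighborSet (Sum.inl b)).ncard = 2) ∧
    ((∀ b ∈ B, ∀ b' ∈ B, b' < b → φ b' < φ b) →
     (∀ b ∈ B, ∀ b' ∈ B, b' < b → φ' b' < φ' b) →
     (matchGraph B φ φ').IsAcyclic ∧
     (∀ v, ((matchGraph B φ φ').neighborSet v).ncard = 1 →
        ∃ r ∈ R, v = Sum.inr r)) :=
  symmetric_difference_structure_general B R φ φ' hφR hφ'R hφ hφ'
end
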